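/- Right contraction of a master formula: for every formula χ there is a strongly preserving function rctr_{⊞χ} from proofs in G∞ℓK⁺_s + Cut to proofs in G∞ℓK⁺_s + Cut such that if π proves Γ ⇒_s Δ,⊞χ,⊞χ then rctr_{⊞χ}(π) proves Γ ⇒_s Δ,⊞χ. -/

import Mathlib

/-! Formulas of the modal language with ⊥, →, □ and the master modality ⊞. -/
inductive Fml : Type
  | var : ℕ → Fml
  | bot : Fml
  | imp : Fml → Fml → Fml
  | box : Fml → Fml
  | mbox : Fml → Fml

/-- The size of a formula (number of symbols). -/
def Fml.size : Fml → ℕ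
  | .var _ => 1
  | .bot => 1
  | .imp a b => a.size + b.size + 1
  | .box a => a.size + 1
  | .mbox a => a.size + 1

/-- Annotations: either a formula in focus or the symbol ∘ (unfocused). -/
inductive Ann : Type
  | o : Ann
  | fml : Fml → Ann

abbrev Msf := Multiset Fml

/-- `Γ, ⊞Γ`. -/
def dne (P : Msf) : Msf := P + P.map Fml.mbox

/-- An annotated sequent `Γ ⇒_s Δ`. -/
structure Sequent where
  left : Msf
  ann : Ann
  right : Msf

/-- The condition for being an annotated sequent: if the annotation is a formula `φ`
then `⊞φ` occurs on the right. -/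
def Sequent.ok (S : Sequent) : Prop :=
  ∀ φ : Fml, S.ann = Ann.fml φ → Fml.mbox φ ∈ S.right

/-- Rule tags: the rule applied at a node of a derivation tree, together with all the
data of the rule instance. -/
inductive Tag : Type
  | ax (Γ : Msf) (p : ℕ) (Δ : Msf) (s : Ann)
  | axBot (Γ : Msf) (Δ : Msf) (s : Ann)
  | impL (Γ : Msf) (φ ψ : Fml) (Δ : Msf) (s : Ann)
  | impR (Γ : Msf) (φ ψ : Fml) (Δ : Msf) (s : Ann)
  | box (Sg Γ P Δ : Msf) (φ : Fml) (s : Ann)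
  | mboxF (Sg Γ P Δ : Msf) (φ : Fml)
  | mboxU (Sg Γ P Δ : Msf) (φ : Fml) (s : Ann)
  | cut (Γ Δ : Msf) (χ : Fml) (s : Ann)

/-- Number of children (premises and witnesses) of each rule. -/
def Tag.arity : Tag → ℕ
  | .ax .. => 0
  | .axBot .. => 0
  | .impL .. => 2
  | .impR .. => 1
  | .box .. => 1
  | .mboxF .. => 2
  | .mboxU .. => 2
  | .cut .. => 2

/-- Conclusion sequent of a rule instance. -/
def Tag.concl : Tag → Sequent
  | .ax Γ p Δ s => ⟨Fml.var p ::ₘ Γ, s, Fml.var p ::ₘ Δ⟩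
  | .axBot Γ Δ s => ⟨Fml.bot ::ₘ Γ, s, Δ⟩
  | .impL Γ φ ψ Δ s => ⟨Fml.imp φ ψ ::ₘ Γ, s, Δ⟩
  | .impR Γ φ ψ Δ s => ⟨Γ, s, Fml.imp φ ψ ::ₘ Δ⟩
  | .box Sg Γ P Δ φ s => ⟨Sg + Γ.map Fml.box + P.map Fml.mbox, s, Fml.box φ ::ₘ Δ⟩
  | .mboxF Sg Γ P Δ φ => ⟨Sg + Γ.map Fml.box + P.map Fml.mbox, Ann.fml φ, Fml.mbox φ ::ₘ Δ⟩
  | .mboxU Sg Γ P Δ φ s => ⟨Sg + Γ.map Fml.box + P.map Fml.mbox, s, Fml.mbox φ ::ₘ Δ⟩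
  | .cut Γ Δ _ s => ⟨Γ, s, Δ⟩

/-- The `i`-th premise/witness sequent of a rule instance (junk value out of range). -/
def Tag.prem : Tag → ℕ → Sequent
  | .impL Γ φ _ Δ s, 0 => ⟨Γ, s, φ ::ₘ Δ⟩
  | .impL Γ _ ψ Δ s, 1 => ⟨ψ ::ₘ Γ, s, Δ⟩
  | .impR Γ φ ψ Δ s, 0 => ⟨φ ::ₘ Γ, s, ψ ::ₘ Δ⟩
  | .box _ Γ P _ φ _, 0 => ⟨Γ + dne P, Ann.o, {φ}⟩
  | .mboxF _ Γ P _ φ, 0 => ⟨Γ + dne P, Ann.o, {φ}⟩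
  | .mboxF _ Γ P _ φ, 1 => ⟨Γ + dne P, Ann.fml φ, {Fml.mbox φ}⟩
  | .mboxU _ Γ P _ φ _, 0 => ⟨Γ + dne P, Ann.o, {φ}⟩
  | .mboxU _ Γ P _ φ _, 1 => ⟨Γ + dne P, Ann.fml φ, {Fml.mbox φ}⟩
  | .cut Γ Δ χ s, 0 => ⟨Γ, s, χ ::ₘ Δ⟩
  | .cut Γ Δ χ s, 1 => ⟨χ ::ₘ Γ, s, Δ⟩
  | _, _ => ⟨0, Ann.o, 0⟩

/-- Side conditions: `⊞_u` is applicable only when `s ≠ φ`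
(`⊞_f` has `s = φ` built into its conclusion). -/
def Tag.sideOk : Tag → Prop
  | .mboxU _ _ _ _ φ s => s ≠ Ann.fml φ
  | _ => True

/-- Which children are witnesses (proofs in a strictly lower-indexed system). -/
def Tag.witness : Tag → ℕ → Bool
  | .box .., 0 => true
  | .mboxF .., 0 => true
  | .mboxU .., 0 => true
  | .mboxU .., 1 => true
  | _, _ => false

/-- Progress occurs exactly at the right premise of `⊞_f`. -/
def Tag.progress : Tag → ℕ → Bool
  | .mboxF .., 1 => true
  | _, _ => false

/-- Whether a node is a cut. -/
def Tag.isCut : Tag → Prop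
  | .cut .. => True
  | _ => False

/-- The cut formula of a cut node. -/
def Tag.cutFml : Tag → Option Fml
  | .cut _ _ χ _ => some χ
  | _ => none

universe u

namespace Ordinal

/-- Natural addition on ordinals (Hessenberg sum), as defined in Mathlib of December 2024
(since removed from Mathlib). -/
noncomputable def nadd : Ordinal.{u} → Ordinal.{u} → Ordinal.{u}
  | a, b =>
    max (blsub.{u, u} a fun a' _ => nadd a' b) (blsub.{u, u} b fun b' _ => nadd a b')
termination_by a b => (a, b)

end Ordinal

/-- A (possibly non-wellfounded) derivation tree: a partial labelling of addresses by
rule instances.  Witnesses (and witnesses of witnesses, and so on) are included as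
subtrees hanging off witness edges. -/
structure PreProof : Type where
  label : List ℕ → Option Tag

namespace PreProof

def dom (π : PreProof) (a : List ℕ) : Prop := π.label a ≠ none

/-- Local well-formedness of a derivation tree. -/
structure Wf (π : PreProof) : Prop where
  root : π.dom []
  prefixClosed : ∀ a i, π.dom (a ++ [i]) → π.dom a
  arity : ∀ a t, π.label a = some t → ∀ i : ℕ, (π.dom (a ++ [i]) ↔ i < t.arity)
  coherent : ∀ a t i ti, π.label a = some t → π.label (a ++ [i]) = some ti →
    ti.concl = t.prem i
  seqOk : ∀ a t, π.label a = some t → t.concl.ok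
  side : ∀ a t, π.label a = some t → t.sideOk

/-- The address of the `n`-th node along the branch `f`. -/
def branchPrefix (f : ℕ → ℕ) (n : ℕ) : List ℕ := (List.range n).map f

/-- `f` is an infinite branch of `π`. -/
def IsBranch (π : PreProof) (f : ℕ → ℕ) : Prop := ∀ n, π.dom (branchPrefix f n)

/-- Every infinite branch crosses progress edges or witness edges infinitely often
(together with the ordinal labelling below, this says every infinite branch of each of
the stratified systems makes progress infinitely often). -/
def ProgressCond (π : PreProof) : Prop :=
  ∀ f : ℕ → ℕ, π.IsBranch f → ∀ N : ℕ, ∃ n, N ≤ n ∧ ∃ t,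
    π.label (branchPrefix f n) = some t ∧
    (t.progress (f n) = true ∨ t.witness (f n) = true)

/-- `π` carries an ordinal labelling witnessing that it is a proof of the system indexed
by `α`: witnesses live in systems of strictly smaller index. -/
def OrdOk (π : PreProof) (α : Ordinal.{0}) : Prop :=
  ∃ ord : List ℕ → Ordinal.{0}, ord [] = α ∧
    ∀ a t (i : ℕ), π.label a = some t → π.dom (a ++ [i]) →
      (t.witness i = true → ord (a ++ [i]) < ord a) ∧
      (t.witness i = false → ord (a ++ [i]) = ord a)

/-- `π` is a proof in `α`-G∞ℓK⁺ + Cut. -/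
def IsProofLe (π : PreProof) (α : Ordinal.{0}) : Prop :=
  π.Wf ∧ π.ProgressCond ∧ π.OrdOk α

/-- `π` is a proof in G∞ℓK⁺ + Cut. -/
def IsProof (π : PreProof) : Prop := π.Wf ∧ π.ProgressCond ∧ ∃ α, π.OrdOk α

/-- `‖π‖`: the least `α` such that `π` is a proof in the `α`-indexed system. -/
noncomputable def height (π : PreProof) : Ordinal.{0} := sInf {α : Ordinal.{0} | π.OrdOk α}

/-- Cut-free (everywhere: in the main fragment, witnesses, witnesses of witnesses, …). -/
def CutFree (π : PreProof) : Prop := ∀ a t, π.label a = some t → ¬ t.isCut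

/-- `π` proves the sequent `S`. -/
def Concl (π : PreProof) (S : Sequent) : Prop :=
  ∃ t, π.label [] = some t ∧ t.concl = S

/-- The subtree at address `a`. -/
def sub (π : PreProof) (a : List ℕ) : PreProof := ⟨fun b => π.label (a ++ b)⟩

/-- `a` belongs to the main global fragment: the path to `a` crosses no witness edges. -/
def inMainGlobal (π : PreProof) (a : List ℕ) : Prop :=
  π.dom a ∧ ∀ b i, (b ++ [i]) <+: a → ∀ t, π.label b = some t → t.witness i = false

/-- `a` belongs to the main local fragment: the path to `a` crosses no witness edges
and no progress edges. -/
def inMainLocal (π : PreProof) (a : List ℕ) : Prop :=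
  π.dom a ∧ ∀ b i, (b ++ [i]) <+: a → ∀ t, π.label b = some t →
    t.witness i = false ∧ t.progress i = false

/-- All cuts occur in the main global fragment (the shape of proofs with mCut:
witnesses are cut-free). -/
def MCutShape (π : PreProof) : Prop :=
  ∀ a t, π.label a = some t → t.isCut → π.inMainGlobal a

/-- No cuts occur in the main global fragment (the shape of proofs with wCut). -/
def WCutShape (π : PreProof) : Prop :=
  ∀ a t, π.label a = some t → t.isCut → ¬ π.inMainGlobal a

/-- No cuts in the main local fragment. -/
def NoCutInMainLocal (π : PreProof) : Prop :=
  ∀ a t, π.label a = some t → t.isCut → ¬ π.inMainLocal a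

/-- `π` has local cuts only: it is a proof in G∞ℓK⁺ + mCut all of whose cuts occur
in its main local fragment. -/
def LocalCutsOnly (π : PreProof) : Prop :=
  π.IsProof ∧ ∀ a t, π.label a = some t → t.isCut → π.inMainLocal a

/-- `τ` is a witness of `π`: a subtree hanging off a witness edge from the main
global fragment. -/
def IsWitnessOf (τ π : PreProof) : Prop :=
  ∃ a t i, π.inMainGlobal a ∧ π.label a = some t ∧ t.witness i = true ∧
    τ = π.sub (a ++ [i])

/-- `|π|`: the local height, i.e. the height of the main local fragment. -/
noncomputable def localHeight (π : PreProof) : ℕ∞ :=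
  ⨆ a ∈ {a : List ℕ | π.inMainLocal a}, (a.length : ℕ∞)

/-- All cuts of `π` (including those in witnesses, witnesses of witnesses, …) have
size smaller than `n`. -/
def CutSizesLt (π : PreProof) (n : ℕ) : Prop :=
  ∀ a t χ, π.label a = some t → t.cutFml = some χ → χ.size < n

/-- `(⊞χ, α)`-unblocked: all cuts have cut formula `χ` or `⊞χ`, and cuts with cut
formula `⊞χ` have height at most `α` and cut-free subproofs at their premises. -/
def Unblocked (π : PreProof) (χ : Fml) (α : Ordinal.{0}) : Prop :=
  ∀ a t ψ, π.label a = some t → t.cutFml = some ψ →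
    (ψ = χ ∨ ψ = Fml.mbox χ) ∧
    (ψ = Fml.mbox χ →
      Ordinal.nadd (π.sub (a ++ [0])).height (π.sub (a ++ [1])).height ≤ α ∧
      (π.sub (a ++ [0])).CutFree ∧ (π.sub (a ++ [1])).CutFree)

end PreProof

/-- `G∞ℓK⁺_s ⊢ Γ ⇒_s Δ` (cut-free provability). -/
def Provable (Γ : Msf) (s : Ann) (Δ : Msf) : Prop :=
  ∃ π : PreProof, π.IsProof ∧ π.CutFree ∧ π.Concl ⟨Γ, s, Δ⟩

/-- `G∞ℓK⁺_s + Cut ⊢ Γ ⇒_s Δ`. -/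
def ProvableC (Γ : Msf) (s : Ann) (Δ : Msf) : Prop :=
  ∃ π : PreProof, π.IsProof ∧ π.Concl ⟨Γ, s, Δ⟩

/-- Cut admissibility for the formula `χ`. -/
def CutAdm (χ : Fml) : Prop :=
  ∀ (s : Ann) (Γ Δ : Msf), Provable Γ s (χ ::ₘ Δ) → Provable (χ ::ₘ Γ) s Δ →
    Provable Γ s Δ

/-- Cut admissibility for `χ` with cuts of height smaller than `α`. -/
def CutAdmBelow (χ : Fml) (α : Ordinal.{0}) : Prop :=
  ∀ (s : Ann) (Γ Δ : Msf) (π τ : PreProof),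
    π.IsProof → π.CutFree → π.Concl ⟨Γ, s, χ ::ₘ Δ⟩ →
    τ.IsProof → τ.CutFree → τ.Concl ⟨χ ::ₘ Γ, s, Δ⟩ →
    Ordinal.nadd π.height τ.height < α →
    Provable Γ s Δ

/-! Preservation properties of functions on proofs. -/

def PreservesOrdHeight (f : PreProof → PreProof) : Prop :=
  ∀ π : PreProof, π.IsProof → (f π).height ≤ π.height

def PreservesLocalHeight (f : PreProof → PreProof) : Prop :=
  ∀ π : PreProof, π.IsProof → (f π).localHeight ≤ π.localHeight

def PreservesCutSizes (f : PreProof → PreProof) : Prop :=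
  ∀ (n : ℕ) (π : PreProof), π.IsProof → π.CutSizesLt n → (f π).CutSizesLt n

def PreservesMainLocalCutFree (f : PreProof → PreProof) : Prop :=
  ∀ π : PreProof, π.IsProof → π.NoCutInMainLocal → (f π).NoCutInMainLocal

def PreservesCutLocality (f : PreProof → PreProof) : Prop :=
  ∀ π : PreProof, π.LocalCutsOnly → (f π).LocalCutsOnly

def PreservesWitnessCutLocality (f : PreProof → PreProof) : Prop :=
  ∀ π : PreProof, π.IsProof → (∀ τ : PreProof, τ.IsWitnessOf π → τ.LocalCutsOnly) →
    ∀ τ : PreProof, τ.IsWitnessOf (f π) → τ.LocalCutsOnly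

def WeaklyPreserving (f : PreProof → PreProof) : Prop :=
  PreservesLocalHeight f ∧ PreservesCutSizes f ∧
    PreservesMainLocalCutFree f ∧ PreservesCutLocality f

def StronglyPreserving (f : PreProof → PreProof) : Prop :=
  WeaklyPreserving f ∧ PreservesOrdHeight f ∧ PreservesWitnessCutLocality f


deriving instance DecidableEq for Fml

namespace RCtr

/-- Erase one occurrence of `⊞χ` from the `Δ`-field of a tag. -/
def ctr (χ : Fml) : Tag → Tag
  | .ax Γ p Δ s => .ax Γ p (Δ.erase (Fml.mbox χ)) s
  | .axBot Γ Δ s => .axBot Γ (Δ.erase (Fml.mbox χ)) s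
  | .impL Γ φ ψ Δ s => .impL Γ φ ψ (Δ.erase (Fml.mbox χ)) s
  | .impR Γ φ ψ Δ s => .impR Γ φ ψ (Δ.erase (Fml.mbox χ)) s
  | .box Sg Γ P Δ φ s => .box Sg Γ P (Δ.erase (Fml.mbox χ)) φ s
  | .mboxF Sg Γ P Δ φ => .mboxF Sg Γ P (Δ.erase (Fml.mbox χ)) φ
  | .mboxU Sg Γ P Δ φ s => .mboxU Sg Γ P (Δ.erase (Fml.mbox χ)) φ s
  | .cut Γ Δ ξ s => .cut Γ (Δ.erase (Fml.mbox χ)) ξ s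

/-- Propositional tags: those whose premises inherit the right-hand context `Δ`. -/
def IsProp : Tag → Prop
  | .impL .. => True
  | .impR .. => True
  | .cut .. => True
  | _ => False

variable (χ : Fml)

lemma arity_ctr (t : Tag) : (ctr χ t).arity = t.arity := by
  cases t <;> rfl

lemma witness_ctr (t : Tag) (i : ℕ) : (ctr χ t).witness i = t.witness i := by
  cases t <;> match i with | 0 => rfl | 1 => rfl | (n+2) => rfl

lemma progress_ctr (t : Tag) (i : ℕ) : (ctr χ t).progress i = t.progress i := by
  cases t <;> match i with | 0 => rfl | 1 => rfl | (n+2) => rfl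

lemma isCut_ctr (t : Tag) : (ctr χ t).isCut ↔ t.isCut := by
  cases t <;> simp [ctr, Tag.isCut]

lemma cutFml_ctr (t : Tag) : (ctr χ t).cutFml = t.cutFml := by
  cases t <;> rfl

lemma sideOk_ctr (t : Tag) : (ctr χ t).sideOk ↔ t.sideOk := by
  cases t <;> simp [ctr, Tag.sideOk]

lemma concl_left_ctr (t : Tag) : (ctr χ t).concl.left = t.concl.left := by
  cases t <;> rfl

lemma concl_ann_ctr (t : Tag) : (ctr χ t).concl.ann = t.concl.ann := by
  cases t <;> rfl

lemma prem_ctr_nonprop (t : Tag) (h : ¬ IsProp t) (i : ℕ) :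
    (ctr χ t).prem i = t.prem i := by
  cases t <;> simp [IsProp] at h <;>
    match i with | 0 => rfl | 1 => rfl | (n+2) => rfl

lemma mem_tail {h : Fml} {Δ : Msf} (hc : 2 ≤ Multiset.count (Fml.mbox χ) (h ::ₘ Δ)) :
    Fml.mbox χ ∈ Δ := by
  rw [Multiset.count_cons] at hc
  apply Multiset.count_pos.mp
  split at hc <;> omega

lemma erase_cons_mem {h : Fml} {Δ : Msf} (hm : Fml.mbox χ ∈ Δ) :
    (h ::ₘ Δ).erase (Fml.mbox χ) = h ::ₘ Δ.erase (Fml.mbox χ) := by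
  by_cases hh : h = Fml.mbox χ
  · subst hh; rw [Multiset.erase_cons_head, Multiset.cons_erase hm]
  · exact Multiset.erase_cons_tail _ hh

lemma concl_ctr (t : Tag) (hc : 2 ≤ Multiset.count (Fml.mbox χ) t.concl.right) :
    (ctr χ t).concl = ⟨t.concl.left, t.concl.ann, t.concl.right.erase (Fml.mbox χ)⟩ := by
  cases t <;> simp only [ctr, Tag.concl] at hc ⊢ <;>
    try rw [erase_cons_mem χ (mem_tail χ hc)]

lemma count_prem (t : Tag) (hp : IsProp t)
    (hc : 2 ≤ Multiset.count (Fml.mbox χ) t.concl.right) (i : ℕ) (hi : i < t.arity) :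
    2 ≤ Multiset.count (Fml.mbox χ) (t.prem i).right := by
  cases t <;> simp [IsProp] at hp <;> simp [Tag.arity] at hi
  case impL Γ φ ψ Δ s =>
    simp only [Tag.concl] at hc
    match i, hi with
    | 0, _ => simp only [Tag.prem, Multiset.count_cons]; omega
    | 1, _ => exact hc
  case impR Γ φ ψ Δ s =>
    have hne : Fml.mbox χ ≠ Fml.imp φ ψ := by simp
    simp only [Tag.concl, Multiset.count_cons, if_neg hne, add_zero] at hc
    match i, hi with
    | 0, _ =>
      simp only [Tag.prem, Multiset.count_cons]
      omega
  case cut Γ Δ ξ s =>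
    simp only [Tag.concl] at hc
    match i, hi with
    | 0, _ => simp only [Tag.prem, Multiset.count_cons]; omega
    | 1, _ => exact hc

lemma prem_ctr_prop (t : Tag) (hp : IsProp t)
    (hc : 2 ≤ Multiset.count (Fml.mbox χ) t.concl.right) (i : ℕ) (hi : i < t.arity) :
    (ctr χ t).prem i =
      ⟨(t.prem i).left, (t.prem i).ann, (t.prem i).right.erase (Fml.mbox χ)⟩ := by
  cases t <;> simp [IsProp] at hp <;> simp [Tag.arity] at hi
  case impL Γ φ ψ Δ s =>
    simp only [Tag.concl] at hc
    have hm : Fml.mbox χ ∈ Δ := Multiset.count_pos.mp (by omega)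
    match i, hi with
    | 0, _ => simp only [ctr, Tag.prem]; rw [erase_cons_mem χ hm]
    | 1, _ => rfl
  case impR Γ φ ψ Δ s =>
    have hne : Fml.mbox χ ≠ Fml.imp φ ψ := by simp
    simp only [Tag.concl, Multiset.count_cons, if_neg hne, add_zero] at hc
    have hm : Fml.mbox χ ∈ Δ := Multiset.count_pos.mp (by omega)
    match i, hi with
    | 0, _ => simp only [ctr, Tag.prem]; rw [erase_cons_mem χ hm]
  case cut Γ Δ ξ s =>
    simp only [Tag.concl] at hc
    have hm : Fml.mbox χ ∈ Δ := Multiset.count_pos.mp (by omega)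
    match i, hi with
    | 0, _ => simp only [ctr, Tag.prem]; rw [erase_cons_mem χ hm]
    | 1, _ => rfl

/-- The region near the root where the contracted formula persists: all strict
ancestors are propositional. -/
def Reg (π : PreProof) (a : List ℕ) : Prop :=
  ∀ b i, (b ++ [i]) <+: a → ∀ t, π.label b = some t → IsProp t

open Classical

/-- The relabelled tree. -/
noncomputable def trf (π : PreProof) : PreProof :=
  ⟨fun a => if Reg π a then (π.label a).map (ctr χ) else π.label a⟩

/-- The guard: the root's right-hand side contains `⊞χ` at least twice. -/
def Guard (π : PreProof) : Prop :=
  ∃ t, π.label [] = some t ∧ 2 ≤ Multiset.count (Fml.mbox χ) t.concl.right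

variable (π : PreProof)

lemma label_pos {a : List ℕ} (h : Reg π a) :
    (trf χ π).label a = (π.label a).map (ctr χ) := by
  simp only [trf]; rw [if_pos h]

lemma label_neg {a : List ℕ} (h : ¬ Reg π a) :
    (trf χ π).label a = π.label a := by
  simp only [trf]; rw [if_neg h]

lemma dom_trf (a : List ℕ) : (trf χ π).dom a ↔ π.dom a := by
  by_cases h : Reg π a
  · rw [PreProof.dom, PreProof.dom, label_pos χ π h, Ne, Option.map_eq_none_iff]
  · rw [PreProof.dom, PreProof.dom, label_neg χ π h]

lemma label_inv {a : List ℕ} {t' : Tag} (h : (trf χ π).label a = some t') :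
    ∃ t, π.label a = some t ∧ ((Reg π a ∧ t' = ctr χ t) ∨ (¬ Reg π a ∧ t' = t)) := by
  by_cases hreg : Reg π a
  · rw [label_pos χ π hreg] at h
    obtain ⟨t, ht, hft⟩ := Option.map_eq_some_iff.mp h
    exact ⟨t, ht, Or.inl ⟨hreg, hft.symm⟩⟩
  · exact ⟨t', by rwa [label_neg χ π hreg] at h, Or.inr ⟨hreg, rfl⟩⟩

lemma dom_of_label {a : List ℕ} {t : Tag} (h : π.label a = some t) : π.dom a := by
  simp [PreProof.dom, h]

lemma reg_nil : Reg π [] := by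
  intro b i h t _
  have := List.prefix_nil.mp h
  simp at this

lemma reg_of_snoc {a : List ℕ} {i : ℕ} (h : Reg π (a ++ [i])) : Reg π a :=
  fun b j hp => h b j (hp.trans (List.prefix_append a [i]))

lemma reg_prop {a : List ℕ} {i : ℕ} {t : Tag} (h : Reg π (a ++ [i]))
    (ht : π.label a = some t) : IsProp t :=
  h a i (List.prefix_refl _) t ht

lemma snoc_prefix_snoc {b a : List ℕ} {j i : ℕ} (h : b ++ [j] <+: a ++ [i]) :
    b ++ [j] <+: a ∨ (b = a ∧ j = i) := by
  obtain ⟨c, hc⟩ := h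
  rcases (by simpa [List.concat_eq_append] using c.eq_nil_or_concat :
      c = [] ∨ ∃ L k, c = L ++ [k]) with rfl | ⟨c', k, rfl⟩
  · right
    rw [List.append_nil] at hc
    have := List.append_inj' hc rfl
    exact ⟨this.1, by simpa using this.2⟩
  · left
    have h1 : (b ++ [j] ++ c') ++ [k] = a ++ [i] := by
      rw [← hc]; simp [List.append_assoc]
    have h2 := List.append_inj' h1 rfl
    exact ⟨c', h2.1⟩

lemma not_reg_ext {a : List ℕ} {t : Tag} (ht : π.label a = some t) (hnp : ¬ IsProp t)
    (i : ℕ) (c : List ℕ) : ¬ Reg π ((a ++ [i]) ++ c) :=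
  fun hreg => hnp (hreg a i (List.prefix_append _ _) t ht)

/-- Key invariant: inside the region, `⊞χ` occurs at least twice on the right. -/
lemma inv (hwf : π.Wf) (hg : Guard χ π) :
    ∀ a, Reg π a → ∀ t, π.label a = some t →
      2 ≤ Multiset.count (Fml.mbox χ) t.concl.right := by
  intro a
  induction a using List.reverseRecOn with
  | nil =>
    intro _ t ht
    obtain ⟨t0, ht0, hc⟩ := hg
    rw [ht0] at ht
    cases ht
    exact hc
  | append_singleton a i ih =>
    intro hreg t ht
    have hdoma : π.dom a := hwf.prefixClosed a i (dom_of_label π ht)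
    obtain ⟨t0, ht0⟩ : ∃ t0, π.label a = some t0 := by
      cases h : π.label a with
      | none => exact absurd h hdoma
      | some t0 => exact ⟨t0, rfl⟩
    have hprop := reg_prop π hreg ht0
    have hcount := ih (reg_of_snoc π hreg) t0 ht0
    have hco := hwf.coherent a t0 i t ht0 ht
    have hi : i < t0.arity := (hwf.arity a t0 ht0 i).mp (dom_of_label π ht)
    rw [hco]
    exact count_prem χ t0 hprop hcount i hi

/-- The relabelled tree is well-formed. -/
lemma wf_trf (hwf : π.Wf) (hg : Guard χ π) : (trf χ π).Wf := by
  constructor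
  · exact (dom_trf χ π []).mpr hwf.root
  · intro a i h
    exact (dom_trf χ π a).mpr (hwf.prefixClosed a i ((dom_trf χ π _).mp h))
  · intro a t' ht' i
    obtain ⟨t, ht, hc⟩ := label_inv χ π ht'
    have ha : t'.arity = t.arity := by
      rcases hc with ⟨_, rfl⟩ | ⟨_, rfl⟩
      · exact arity_ctr χ t
      · rfl
    rw [dom_trf, ha]
    exact hwf.arity a t ht i
  · intro a t' i ti' ht' hti'
    obtain ⟨t, ht, hc⟩ := label_inv χ π ht'
    obtain ⟨ti, hti, hci⟩ := label_inv χ π hti'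
    have hco := hwf.coherent a t i ti ht hti
    rcases hc with ⟨hreg, rfl⟩ | ⟨hnreg, rfl⟩
    · by_cases hp : IsProp t
      · have hregi : Reg π (a ++ [i]) := by
          intro b j hpre tb htb
          rcases snoc_prefix_snoc hpre with h1 | ⟨rfl, rfl⟩
          · exact hreg b j h1 tb htb
          · rw [ht] at htb; cases htb; exact hp
        rcases hci with ⟨_, rfl⟩ | ⟨hn, _⟩
        swap
        · exact absurd hregi hn
        have h2 := inv χ π hwf hg a hreg t ht
        have h2i := inv χ π hwf hg (a ++ [i]) hregi ti hti
        have hi : i < t.arity := (hwf.arity a t ht i).mp (dom_of_label π hti)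
        rw [concl_ctr χ ti h2i, prem_ctr_prop χ t hp h2 i hi, hco]
      · have hnregi : ¬ Reg π (a ++ [i]) := fun hr => hp (reg_prop π hr ht)
        rcases hci with ⟨hr, _⟩ | ⟨_, rfl⟩
        · exact absurd hr hnregi
        rw [prem_ctr_nonprop χ t hp i]
        exact hco
    · have hnregi : ¬ Reg π (a ++ [i]) := fun hr => hnreg (reg_of_snoc π hr)
      rcases hci with ⟨hr, _⟩ | ⟨_, rfl⟩
      · exact absurd hr hnregi
      exact hco
  · intro a t' ht'
    obtain ⟨t, ht, hc⟩ := label_inv χ π ht'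
    rcases hc with ⟨hreg, rfl⟩ | ⟨_, heq⟩
    · have h2 := inv χ π hwf hg a hreg t ht
      rw [concl_ctr χ t h2]
      intro φ hann
      have hmem := hwf.seqOk a t ht φ hann
      by_cases hφ : Fml.mbox φ = Fml.mbox χ
      · rw [hφ]
        apply Multiset.count_pos.mp
        rw [Multiset.count_erase_self]
        rw [hφ] at hmem
        omega
      · exact (Multiset.mem_erase_of_ne hφ).mpr hmem
    · exact heq ▸ hwf.seqOk a t ht
  · intro a t' ht'
    obtain ⟨t, ht, hc⟩ := label_inv χ π ht'
    rcases hc with ⟨_, rfl⟩ | ⟨_, heq⟩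
    · exact (sideOk_ctr χ t).mpr (hwf.side a t ht)
    · exact heq ▸ hwf.side a t ht

lemma pc_trf (hpc : π.ProgressCond) : (trf χ π).ProgressCond := by
  intro f hf N
  have hf' : π.IsBranch f := fun n => (dom_trf χ π _).mp (hf n)
  obtain ⟨n, hN, t, ht, hflag⟩ := hpc f hf' N
  refine ⟨n, hN, ?_⟩
  by_cases hreg : Reg π (PreProof.branchPrefix f n)
  · refine ⟨ctr χ t, by rw [label_pos χ π hreg, ht]; rfl, ?_⟩
    rwa [progress_ctr, witness_ctr]
  · exact ⟨t, by rw [label_neg χ π hreg]; exact ht, hflag⟩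

lemma ord_trf {α : Ordinal.{0}} (h : π.OrdOk α) : (trf χ π).OrdOk α := by
  obtain ⟨ord, h0, hord⟩ := h
  refine ⟨ord, h0, ?_⟩
  intro a t' i ht' hdom
  obtain ⟨t, ht, hc⟩ := label_inv χ π ht'
  have hw : t'.witness i = t.witness i := by
    rcases hc with ⟨_, rfl⟩ | ⟨_, rfl⟩
    · exact witness_ctr χ t i
    · rfl
  rw [hw]
  exact hord a t i ht ((dom_trf χ π _).mp hdom)

lemma isProof_trf (h : π.IsProof) (hg : Guard χ π) : (trf χ π).IsProof := by
  obtain ⟨hwf, hpc, α, hα⟩ := h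
  exact ⟨wf_trf χ π hwf hg, pc_trf χ π hpc, α, ord_trf χ π hα⟩

lemma height_trf (h : π.IsProof) : (trf χ π).height ≤ π.height := by
  obtain ⟨_, _, α, hα⟩ := h
  have hne : {β : Ordinal.{0} | π.OrdOk β}.Nonempty := ⟨α, hα⟩
  have hmem := csInf_mem hne
  exact csInf_le (OrderBot.bddBelow _) (ord_trf χ π hmem)

lemma iml_trf (a : List ℕ) : (trf χ π).inMainLocal a ↔ π.inMainLocal a := by
  unfold PreProof.inMainLocal
  rw [dom_trf]
  refine and_congr_right fun _ => ?_
  constructor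
  · intro H b i hp t ht
    by_cases hreg : Reg π b
    · have := H b i hp (ctr χ t) (by rw [label_pos χ π hreg, ht]; rfl)
      rwa [witness_ctr, progress_ctr] at this
    · exact H b i hp t (by rw [label_neg χ π hreg]; exact ht)
  · intro H b i hp t' ht'
    obtain ⟨t, ht, hc⟩ := label_inv χ π ht'
    have := H b i hp t ht
    rcases hc with ⟨_, rfl⟩ | ⟨_, rfl⟩
    · rwa [witness_ctr, progress_ctr]
    · exact this

lemma img_trf (a : List ℕ) : (trf χ π).inMainGlobal a ↔ π.inMainGlobal a := by
  unfold PreProof.inMainGlobal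
  rw [dom_trf]
  refine and_congr_right fun _ => ?_
  constructor
  · intro H b i hp t ht
    by_cases hreg : Reg π b
    · have := H b i hp (ctr χ t) (by rw [label_pos χ π hreg, ht]; rfl)
      rwa [witness_ctr] at this
    · exact H b i hp t (by rw [label_neg χ π hreg]; exact ht)
  · intro H b i hp t' ht'
    obtain ⟨t, ht, hc⟩ := label_inv χ π ht'
    have := H b i hp t ht
    rcases hc with ⟨_, rfl⟩ | ⟨_, rfl⟩
    · rwa [witness_ctr]
    · exact this

lemma lh_trf : (trf χ π).localHeight = π.localHeight := by
  unfold PreProof.localHeight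
  simp only [Set.mem_setOf_eq, iml_trf]

lemma sub_trf {a : List ℕ} {t : Tag} (ht : π.label a = some t) (hnp : ¬ IsProp t)
    (i : ℕ) : (trf χ π).sub (a ++ [i]) = π.sub (a ++ [i]) := by
  unfold PreProof.sub
  refine congrArg PreProof.mk (funext fun c => ?_)
  exact label_neg χ π (not_reg_ext π ht hnp i c)

lemma witness_not_prop {t : Tag} {i : ℕ} (h : t.witness i = true) : ¬ IsProp t := by
  cases t <;> simp [IsProp] <;> revert h <;>
    match i with
    | 0 => simp [Tag.witness]
    | 1 => simp [Tag.witness]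
    | (n+2) => simp [Tag.witness]

/-- The contraction function. -/
noncomputable def F (π : PreProof) : PreProof :=
  if Guard χ π then trf χ π else π

lemma F_pos (hg : Guard χ π) : F χ π = trf χ π := if_pos hg

lemma F_neg (hg : ¬ Guard χ π) : F χ π = π := if_neg hg
end RCtr

/-- **Right contraction of a master formula**: there is a strongly preserving function
`rctr_{⊞χ}` turning proofs of `Γ ⇒_s Δ,⊞χ,⊞χ` into proofs of `Γ ⇒_s Δ,⊞χ`. -/
theorem right_contraction_mbox_exists (χ : Fml) :
    ∃ f : PreProof → PreProof, StronglyPreserving f ∧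
      ∀ (Γ Δ : Msf) (s : Ann) (π : PreProof), π.IsProof →
        π.Concl ⟨Γ, s, Fml.mbox χ ::ₘ Fml.mbox χ ::ₘ Δ⟩ →
        (f π).IsProof ∧ (f π).Concl ⟨Γ, s, Fml.mbox χ ::ₘ Δ⟩ := by
  classical
  refine ⟨RCtr.F χ, ⟨⟨?_, ?_, ?_, ?_⟩, ?_, ?_⟩, ?_⟩
  · -- PreservesLocalHeight
    intro π _
    by_cases hg : RCtr.Guard χ π
    · rw [RCtr.F_pos χ π hg, RCtr.lh_trf]
    · rw [RCtr.F_neg χ π hg]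
  · -- PreservesCutSizes
    intro n π _ hlt
    by_cases hg : RCtr.Guard χ π
    · rw [RCtr.F_pos χ π hg]
      intro a t' ξ ht' hcf
      obtain ⟨t, ht, hc⟩ := RCtr.label_inv χ π ht'
      refine hlt a t ξ ht ?_
      rcases hc with ⟨_, rfl⟩ | ⟨_, heq⟩
      · rwa [RCtr.cutFml_ctr] at hcf
      · rwa [heq] at hcf
    · rwa [RCtr.F_neg χ π hg]
  · -- PreservesMainLocalCutFree
    intro π _ h
    by_cases hg : RCtr.Guard χ π
    · rw [RCtr.F_pos χ π hg]
      intro a t' ht' hcut hml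
      obtain ⟨t, ht, hc⟩ := RCtr.label_inv χ π ht'
      have hcut' : t.isCut := by
        rcases hc with ⟨_, rfl⟩ | ⟨_, heq⟩
        · exact (RCtr.isCut_ctr χ t).mp hcut
        · exact heq ▸ hcut
      exact h a t ht hcut' ((RCtr.iml_trf χ π a).mp hml)
    · rwa [RCtr.F_neg χ π hg]
  · -- PreservesCutLocality
    rintro π ⟨hp, hloc⟩
    by_cases hg : RCtr.Guard χ π
    · rw [RCtr.F_pos χ π hg]
      refine ⟨RCtr.isProof_trf χ π hp hg, ?_⟩
      intro a t' ht' hcut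
      obtain ⟨t, ht, hc⟩ := RCtr.label_inv χ π ht'
      have hcut' : t.isCut := by
        rcases hc with ⟨_, rfl⟩ | ⟨_, heq⟩
        · exact (RCtr.isCut_ctr χ t).mp hcut
        · exact heq ▸ hcut
      exact (RCtr.iml_trf χ π a).mpr (hloc a t ht hcut')
    · rw [RCtr.F_neg χ π hg]
      exact ⟨hp, hloc⟩
  · -- PreservesOrdHeight
    intro π hp
    by_cases hg : RCtr.Guard χ π
    · rw [RCtr.F_pos χ π hg]
      exact RCtr.height_trf χ π hp
    · rw [RCtr.F_neg χ π hg]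
  · -- PreservesWitnessCutLocality
    intro π hp hw τ hτ
    by_cases hg : RCtr.Guard χ π
    · rw [RCtr.F_pos χ π hg] at hτ
      obtain ⟨a, t', i, himg, ht', hwit, hsub⟩ := hτ
      obtain ⟨t, ht, hc⟩ := RCtr.label_inv χ π ht'
      have hwit' : t.witness i = true := by
        rcases hc with ⟨_, rfl⟩ | ⟨_, heq⟩
        · rwa [RCtr.witness_ctr] at hwit
        · exact heq ▸ hwit
      have hnp := RCtr.witness_not_prop hwit'
      refine hw τ ⟨a, t, i, (RCtr.img_trf χ π a).mp himg, ht, hwit', ?_⟩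
      rw [hsub, RCtr.sub_trf χ π ht hnp]
    · rw [RCtr.F_neg χ π hg] at hτ
      exact hw τ hτ
  · -- the contraction itself
    intro Γ Δ s π hp hconcl
    obtain ⟨t, ht, hc⟩ := hconcl
    have h2 : 2 ≤ Multiset.count (Fml.mbox χ) t.concl.right := by
      rw [hc]
      simp [Multiset.count_cons]
    have hg : RCtr.Guard χ π := ⟨t, ht, h2⟩
    rw [RCtr.F_pos χ π hg]
    refine ⟨RCtr.isProof_trf χ π hp hg, RCtr.ctr χ t, ?_, ?_⟩
    · rw [RCtr.label_pos χ π (RCtr.reg_nil π), ht]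
      rfl
    · rw [RCtr.concl_ctr χ t h2, hc]
      simp [Multiset.erase_cons_head]
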